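/- For every n ≥ 1 one has P(Aₙ) ≥ 1/8; consequently limsup_{n→∞} E[Rₙ]/n ≤ 1 − 1/24 = 23/24 < 1. In particular the asymptotic range of this random walk is strictly smaller than 1 − P[∃n ≥ 1 : Xₙ = o] = 1, so the group-case formula for the asymptotic range fails for general free products of graphs. -/

import Mathlib

open MeasureTheory Filter
open scoped ENNReal NNReal Classical

/-- Setup for a free product of two graphs `V₁ ∗ V₂`: two disjoint countable vertex
sets with roots, each with at least two elements, transition matrices whose rows sum
to one, every vertex reachable from the root, a uniform positive lower bound `ε₀` on
the positive entries, and a mixing parameter `α ∈ (0,1)`. -/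
structure Setup (V₁ : Type) (V₂ : Type) [Countable V₁] [Countable V₂]
    [DecidableEq V₁] [DecidableEq V₂] where
  o₁ : V₁
  o₂ : V₂
  nontrivial₁ : ∃ x : V₁, x ≠ o₁
  nontrivial₂ : ∃ x : V₂, x ≠ o₂
  p₁ : V₁ → V₁ → ℝ
  p₂ : V₂ → V₂ → ℝ
  p₁_nonneg : ∀ x y, 0 ≤ p₁ x y
  p₂_nonneg : ∀ x y, 0 ≤ p₂ x y
  p₁_rowSum : ∀ x, HasSum (p₁ x) 1
  p₂_rowSum : ∀ x, HasSum (p₂ x) 1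
  /-- every vertex of `V₁` is reachable from the root `o₁` with positive probability -/
  acc₁ : ∀ x : V₁, ∃ l : List V₁, List.Chain (fun u v => 0 < p₁ u v) o₁ l ∧
    (o₁ :: l).getLast (List.cons_ne_nil _ _) = x
  acc₂ : ∀ x : V₂, ∃ l : List V₂, List.Chain (fun u v => 0 < p₂ u v) o₂ l ∧
    (o₂ :: l).getLast (List.cons_ne_nil _ _) = x
  ε₀ : ℝ
  ε₀_pos : 0 < ε₀
  ε₀_le₁ : ∀ x y, 0 < p₁ x y → ε₀ ≤ p₁ x y
  ε₀_le₂ : ∀ x y, 0 < p₂ x y → ε₀ ≤ p₂ x y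
  α : ℝ
  α_pos : 0 < α
  α_lt_one : α < 1

namespace Setup

variable {V₁ V₂ : Type} [Countable V₁] [Countable V₂] [DecidableEq V₁] [DecidableEq V₂]
variable (S : Setup V₁ V₂)

/-- A letter of the free product: an element of `V₁^× = V₁ ∖ {o₁}` or of `V₂^× = V₂ ∖ {o₂}`. -/
def Letter : Type := {x : V₁ // x ≠ S.o₁} ⊕ {x : V₂ // x ≠ S.o₂}

instance : DecidableEq S.Letter :=
  inferInstanceAs (DecidableEq ({x : V₁ // x ≠ S.o₁} ⊕ {x : V₂ // x ≠ S.o₂}))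
instance : Countable S.Letter :=
  inferInstanceAs (Countable ({x : V₁ // x ≠ S.o₁} ⊕ {x : V₂ // x ≠ S.o₂}))

/-- the factor a letter belongs to: `true` for `V₁^×`, `false` for `V₂^×`. -/
def ltype : S.Letter → Bool := Sum.elim (fun _ => true) (fun _ => false)

/-- An element of the free product `V = V₁ ∗ V₂`: a finite word over the alphabet
`V₁^× ∪ V₂^×` in which no two consecutive letters lie in the same factor. -/
def Word : Type := {l : List S.Letter // l.Chain' fun a b => S.ltype a ≠ S.ltype b}

instance : DecidableEq S.Word :=
  inferInstanceAs (DecidableEq {l : List S.Letter // l.Chain' fun a b => S.ltype a ≠ S.ltype b})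
instance : Countable S.Word :=
  inferInstanceAs (Countable {l : List S.Letter // l.Chain' fun a b => S.ltype a ≠ S.ltype b})
instance : MeasurableSpace S.Word := ⊤

/-- the empty word `o`. -/
def emp : S.Word := ⟨[], List.isChain_nil⟩

/-- word length `‖u‖`. -/
def wlen (u : S.Word) : ℕ := u.val.length

/-- the last letter `[u]` of a word (`none` for the empty word). -/
def lastLetter (u : S.Word) : Option S.Letter := u.val.getLast?

/-- the type `τ(u)` of a word: the factor of its last letter (`none` for `o`). -/
def wtype (u : S.Word) : Option Bool := (u.val.getLast?).map S.ltype

/-- the factor of the first letter of a word (`none` for `o`). -/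
def firstType (u : S.Word) : Option Bool := (u.val.head?).map S.ltype

/-- the cone `C(x)`: all words having `x` as a prefix. -/
def cone (x : S.Word) : Set S.Word := {y | x.val <+: y.val}

/-- the one-letter word determined by a letter. -/
def single (g : S.Letter) : S.Word := ⟨[g], List.isChain_singleton g⟩

/-- the word `u` with its last letter removed in case that letter lies in factor `i`
(so `u = (stripLast i u)·v` with `v ∈ Vᵢ`). -/
def stripLast (i : Bool) (u : S.Word) : List S.Letter :=
  if (u.val.getLast?).map S.ltype = some i then u.val.dropLast else u.val

/-- the `V₁`-component of the last letter of `u` (`o₁` if the last letter is not in `V₁^×`). -/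
def lastIn₁ (u : S.Word) : V₁ :=
  ((u.val.getLast?).map (Sum.elim Subtype.val fun _ => S.o₁)).getD S.o₁

/-- the `V₂`-component of the last letter of `u` (`o₂` if the last letter is not in `V₂^×`). -/
def lastIn₂ (u : S.Word) : V₂ :=
  ((u.val.getLast?).map (Sum.elim (fun _ => S.o₂) Subtype.val)).getD S.o₂

/-- the lift `p̄₁` of `P₁` to the free product: `p̄₁(xv,xw) = p₁(v,w)` for `v,w ∈ V₁`. -/
def pbar₁ (u w : S.Word) : ℝ :=
  if S.stripLast true u = S.stripLast true w then S.p₁ (S.lastIn₁ u) (S.lastIn₁ w) else 0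

/-- the lift `p̄₂` of `P₂` to the free product. -/
def pbar₂ (u w : S.Word) : ℝ :=
  if S.stripLast false u = S.stripLast false w then S.p₂ (S.lastIn₂ u) (S.lastIn₂ w) else 0

/-- the single-step transition probabilities `P = α·P̄₁ + (1−α)·P̄₂` of the random walk. -/
def step (u w : S.Word) : ℝ := S.α * S.pbar₁ u w + (1 - S.α) * S.pbar₂ u w

/-- single-step transition probabilities, as extended nonnegative reals. -/
noncomputable def stepE (u w : S.Word) : ℝ≥0∞ := ENNReal.ofReal (S.step u w)

/-- the `n`-step transition probabilities `p^{(n)}(x,y)`. -/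
noncomputable def pn : ℕ → S.Word → S.Word → ℝ≥0∞
  | 0, u, w => if u = w then 1 else 0
  | n + 1, u, w => ∑' v : S.Word, pn n u v * S.stepE v w

/-- `G′(x,x|1) = Σ_{n≥1} n·p^{(n)}(x,x)`, the derivative at `z = 1` of the Green
function `G(x,x|z)`. -/
noncomputable def Gderiv (x : S.Word) : ℝ≥0∞ := ∑' n : ℕ, (n : ℝ≥0∞) * S.pn n x x

/-- the assumption that all Green functions `G(x,y|z) = Σ p^{(n)}(x,y) zⁿ` have radius
of convergence at least `R` for some `R > 1`. -/
def GreenRadiusGT1 : Prop :=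
  ∃ R : ℝ≥0, 1 < R ∧ ∀ x y : S.Word, ∀ r : ℝ≥0, r < R →
    (∑' n : ℕ, S.pn n x y * (r : ℝ≥0∞) ^ n) ≠ ⊤

/-- `fvisit n y x` is the probability, starting at `y`, that the first visit to `x`
occurs exactly at time `n`. -/
noncomputable def fvisit : ℕ → S.Word → S.Word → ℝ≥0∞
  | 0, y, x => if y = x then 1 else 0
  | n + 1, y, x => if y = x then 0 else ∑' z : S.Word, S.stepE y z * fvisit n z x

/-- `U(x,x)`: the probability of returning to `x` when starting at `x`. -/
noncomputable def Uret (x : S.Word) : ℝ≥0∞ :=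
  ∑' n : ℕ, ∑' z : S.Word, S.stepE x z * S.fvisit n z x

/-- the exit times: `e₀ = 0` and `e_k = inf{m > e_{k−1} : ‖Xₙ‖ ≥ k for all n ≥ m}`
(`0` by convention if no such time exists). -/
noncomputable def eT : ℕ → (ℕ → S.Word) → ℕ
  | 0, _ => 0
  | k + 1, ω => sInf {m | eT k ω < m ∧ ∀ n ≥ m, k + 1 ≤ S.wlen (ω n)}

/-- `W_k = [X_{e_k}]`, the `k`-th stabilized letter. -/
noncomputable def Wlast (k : ℕ) (ω : ℕ → S.Word) : Option S.Letter :=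
  S.lastLetter (ω (S.eT k ω))

/-- the set of vertices visited up to time `n`. -/
def visited (n : ℕ) (ω : ℕ → S.Word) : Set S.Word := {x | ∃ j ≤ n, ω j = x}

/-- the shift `x⁻¹A` deleting the prefix `x` from each element of `A ⊆ C(x)`. -/
def wshift (x : S.Word) (A : Set S.Word) : Set S.Word := {y | ∃ a ∈ A, a.val = x.val ++ y.val}

/-- (the support of) `ψ_k`: for `k ≥ 2` the set obtained from
`{X₀,…,X_{e_k}} ∩ C(X_{e_{k−1}})` by deleting the prefix `X_{e_{k−1}}`; for `k = 1`
the set `{X₀,…,X_{e₁}} ∩ V*_{τ(X_{e₁})}`. -/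
noncomputable def psi (k : ℕ) (ω : ℕ → S.Word) : Set S.Word :=
  if k = 1 then
    {x | x ∈ S.visited (S.eT 1 ω) ω ∧ (x = S.emp ∨ S.firstType x = S.wtype (ω (S.eT 1 ω)))}
  else
    S.wshift (ω (S.eT (k - 1) ω)) (S.visited (S.eT k ω) ω ∩ S.cone (ω (S.eT (k - 1) ω)))

/-- the range `Rₙ = |{X₀,…,Xₙ}|`. -/
noncomputable def rangeCount (n : ℕ) (ω : ℕ → S.Word) : ℕ :=
  ((Finset.range (n + 1)).image ω).card

/-- the maximal exit time index `k(n) = max{k : e_k ≤ n}`. -/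
noncomputable def kmax (n : ℕ) (ω : ℕ → S.Word) : ℕ := sSup {k | S.eT k ω ≤ n}

end Setup

/-- A family of Markov measures for the random walk on the free product:
`P x` is the law of the walk started at `x`, so that the probability of any cylinder
`[X₀ = w₀, …, Xₙ = wₙ]` equals `δ_x(w₀)·∏ p(wᵢ, wᵢ₊₁)`. -/
structure RW {V₁ V₂ : Type} [Countable V₁] [Countable V₂] [DecidableEq V₁] [DecidableEq V₂]
    (S : Setup V₁ V₂) where
  P : S.Word → Measure (ℕ → S.Word)
  prob : ∀ x, IsProbabilityMeasure (P x)
  cyl : ∀ (x : S.Word) (n : ℕ) (w : Fin (n + 1) → S.Word),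
    P x {ω | ∀ i : Fin (n + 1), ω (i : ℕ) = w i} =
      (if w 0 = x then 1 else 0) * ∏ i : Fin n, S.stepE (w i.castSucc) (w i.succ)

namespace Setup

variable {V₁ V₂ : Type} [Countable V₁] [Countable V₂] [DecidableEq V₁] [DecidableEq V₂]
variable (S : Setup V₁ V₂)

/-- `ξᵢ = P[∃ n ≥ 1 : Xₙ ∈ Vᵢ^×]` (for the walk started at `o`). -/
noncomputable def xi (X : RW S) (i : Bool) : ℝ≥0∞ :=
  X.P S.emp {ω | ∃ n, 1 ≤ n ∧ S.wlen (ω n) = 1 ∧ S.wtype (ω n) = some i}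

/-- `D_k`, the support of `(W_k, ψ_k)`. -/
noncomputable def Dsupp (X : RW S) (k : ℕ) : Set (S.Letter × Set S.Word) :=
  {gf | 0 < X.P S.emp {ω | S.Wlast k ω = some gf.1 ∧ S.psi k ω = gf.2}}

/-- the event `[(W₁,ψ₁) = s₁, …, (W_k,ψ_k) = s_k]`. -/
noncomputable def histEvent (k : ℕ) (s : ℕ → S.Letter × Set S.Word) : Set (ℕ → S.Word) :=
  {ω | ∀ j, 1 ≤ j → j ≤ k → S.Wlast j ω = some (s j).1 ∧ S.psi j ω = (s j).2}

/-- `q` is a (homogeneous) transition kernel for the process `(W_k, ψ_k)_{k≥1}`: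
the conditional probability of the next state given the whole history depends only on
the current and the next state, via `q`. -/
def IsExitKernel (X : RW S) (q : S.Letter × Set S.Word → S.Letter × Set S.Word → ℝ≥0∞) : Prop :=
  ∀ k, 1 ≤ k → ∀ s : ℕ → S.Letter × Set S.Word,
    0 < X.P S.emp (S.histEvent k s) →
    X.P S.emp (S.histEvent (k + 1) s) = X.P S.emp (S.histEvent k s) * q (s k) (s (k + 1))

/-- `R̃₁` as a function of the state `(g,f)`: `|supp f ∖ C(g)|`. -/
noncomputable def RtilFun (gf : S.Letter × Set S.Word) : ℝ≥0∞ :=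
  ((gf.2 \ S.cone (S.single gf.1)).encard : ℝ≥0∞)

/-- `O₁` as a function of the state `(g,f)`: `|supp f ∩ C(g)|`. -/
noncomputable def OverFun (gf : S.Letter × Set S.Word) : ℝ≥0∞ :=
  ((gf.2 ∩ S.cone (S.single gf.1)).encard : ℝ≥0∞)

/-- cone of an optional letter. -/
def coneOpt : Option S.Letter → Set S.Word
  | some g => S.cone (S.single g)
  | none => ∅

/-- the overhead `O_k = |supp(ψ_k) ∩ C(W_k)|`. -/
noncomputable def Ocount (k : ℕ) (ω : ℕ → S.Word) : ℝ≥0∞ :=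
  ((S.psi k ω ∩ S.coneOpt (S.Wlast k ω)).encard : ℝ≥0∞)

/-- `|supp(ψ_k)|`. -/
noncomputable def psiCount (k : ℕ) (ω : ℕ → S.Word) : ℝ≥0∞ :=
  ((S.psi k ω).encard : ℝ≥0∞)

end Setup

/-- `n`-step transition powers of a kernel `q` on a countable state space. -/
noncomputable def kpow {σ : Type} (q : σ → σ → ℝ≥0∞) : ℕ → σ → σ → ℝ≥0∞
  | 0, s, t => if s = t then 1 else 0
  | n + 1, s, t => ∑' u : σ, kpow q n s u * q u t

/-- `π` is an invariant (stationary) probability measure, supported on `D`, of the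
chain with transition kernel `q`. -/
def IsStationaryDist {σ : Type} (q : σ → σ → ℝ≥0∞) (D : Set σ) (π : σ → ℝ≥0∞) : Prop :=
  (∑' s : σ, π s) = 1 ∧ (∀ s, s ∉ D → π s = 0) ∧ ∀ t, (∑' s : σ, π s * q s t) = π t


/-!
No transition of this walk enters `o`, since the columns of `P₁` and `P₂` at the roots vanish.
From any other vertex the walk can, with probability `(1/2)^3`, oscillate for three steps inside
its last `V₂`-letter (`…a → …ab → …ac → …ab`, `…b → …c → …b → …c`, `…c → …b → …c → …b`), so by
the Markov property at time `N ≥ 1` the event `Aₙ` has probability at least `1/8`. Every block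
`[3m, 3m+3]` in which such an oscillation happens contains a time at which an earlier vertex is
revisited, hence `E[Rₙ] ≤ n + 1 - (n/3 - 1)/8` and `limsup E[Rₙ]/n ≤ 23/24`, while the return
probability to `o` is `0`.
-/

section MarkovChain

variable {α : Type*} [DecidableEq α]

noncomputable def pathWeight (p : α → α → ℝ≥0∞) (x : α) {N : ℕ} (w : Fin (N + 1) → α) : ℝ≥0∞ :=
  (if w 0 = x then 1 else 0) * ∏ i : Fin N, p (w i.castSucc) (w i.succ)

lemma pathWeight_snoc (p : α → α → ℝ≥0∞) (x : α) {N : ℕ} (u : Fin (N + 1) → α) (y : α) :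
    pathWeight p x (Fin.snoc u y : Fin (N + 2) → α) = pathWeight p x u * p (u (Fin.last N)) y := by
  simp only [pathWeight, Fin.prod_univ_castSucc, Fin.snoc_castSucc, Fin.succ_castSucc,
    Fin.succ_last, Fin.snoc_last, mul_assoc]
  rfl

variable [MeasurableSpace α]

structure IsMarkovLaw (p : α → α → ℝ≥0∞) (x : α) (μ : Measure (ℕ → α)) : Prop where
  measure_cylinder : ∀ (N : ℕ) (w : Fin (N + 1) → α),
    μ {ω | ∀ i : Fin (N + 1), ω i = w i} = pathWeight p x w

variable [MeasurableSingletonClass α] [Countable α] {p : α → α → ℝ≥0∞} {x : α}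
  {μ : Measure (ℕ → α)}

namespace IsMarkovLaw

lemma measure_prefix_mem_eq_tsum (hμ : IsMarkovLaw p x μ) {N : ℕ} (F : Set (Fin (N + 1) → α)) :
    μ {ω | (fun i : Fin (N + 1) => ω i) ∈ F} =
      ∑' w : F, pathWeight p x (w : Fin (N + 1) → α) := by
  have hmeas : Measurable fun (ω : ℕ → α) (i : Fin (N + 1)) => ω i :=
    measurable_pi_lambda _ fun i => measurable_pi_apply _
  change μ ((fun (ω : ℕ → α) (i : Fin (N + 1)) => ω i) ⁻¹' F) = _
  rw [← tsum_measure_preimage_singleton F.to_countable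
    fun w _ => hmeas (measurableSet_singleton w)]
  refine tsum_congr fun w => ?_
  rw [← hμ.measure_cylinder]
  congr 1
  ext ω
  simp [funext_iff]

lemma measure_prefix_mem_and_eq_mul (hμ : IsMarkovLaw p x μ) {N : ℕ} (F : Set (Fin (N + 1) → α))
    {z : α} (hF : ∀ u ∈ F, u (Fin.last N) = z) (y : α) :
    μ {ω | (fun i : Fin (N + 1) => ω i) ∈ F ∧ ω (N + 1) = y} =
      μ {ω | (fun i : Fin (N + 1) => ω i) ∈ F} * p z y := by
  have hset : {ω : ℕ → α | (fun i : Fin (N + 1) => ω i) ∈ F ∧ ω (N + 1) = y} =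
      {ω | (fun i : Fin (N + 2) => ω i) ∈ (fun u => (Fin.snoc u y : Fin (N + 2) → α)) '' F} := by
    ext ω
    constructor
    · rintro ⟨hω, rfl⟩
      exact ⟨_, hω, Fin.snoc_init_self (fun i : Fin (N + 2) => ω i)⟩
    · rintro ⟨u, hu, h⟩
      have hinit := congrArg Fin.init h
      rw [Fin.init_snoc] at hinit
      exact ⟨by rwa [hinit] at hu, by simpa using (congrFun h (Fin.last _)).symm⟩
  have hinj : Function.Injective fun u : Fin (N + 1) → α => (Fin.snoc u y : Fin (N + 2) → α) :=
    fun u v h => by simpa using congrArg Fin.init h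
  rw [hset, hμ.measure_prefix_mem_eq_tsum, hμ.measure_prefix_mem_eq_tsum, tsum_image _ hinj.injOn,
    ← ENNReal.tsum_mul_right]
  exact tsum_congr fun u => by rw [pathWeight_snoc, hF u u.2]

lemma measure_path_eq_mul (hμ : IsMarkovLaw p x μ) (N : ℕ) :
    ∀ {k : ℕ} (w : Fin (k + 1) → α), μ {ω | ∀ i : Fin (k + 1), ω (N + i) = w i} =
      μ {ω | ω N = w 0} * ∏ i : Fin k, p (w i.castSucc) (w i.succ)
  | 0, w => by simp
  | k + 1, w => by
    have hset : {ω : ℕ → α | ∀ i : Fin (k + 2), ω (N + i) = w i} =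
        {ω | (fun j : Fin (N + k + 1) => ω j) ∈
          {u | ∀ i : Fin (k + 1), u ⟨N + i, by omega⟩ = Fin.init w i} ∧
          ω (N + k + 1) = w (Fin.last (k + 1))} := by
      ext ω
      simp only [Fin.forall_fin_succ', Set.mem_ofPred_eq, Fin.init]
      rfl
    rw [hset, hμ.measure_prefix_mem_and_eq_mul _ (z := w (Fin.last k).castSucc)
      fun _ hu => by exact hu (Fin.last k)]
    change μ {ω | ∀ i : Fin (k + 1), ω (N + i) = Fin.init w i} * _ = _
    rw [measure_path_eq_mul hμ N (Fin.init w),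
      Fin.prod_univ_castSucc (fun i : Fin (k + 1) => p (w i.castSucc) (w i.succ)), mul_assoc]
    rfl

lemma measure_eq_zero_of_forall_eq_zero (hμ : IsMarkovLaw p x μ) {y : α} (hy : ∀ z, p z y = 0)
    (N : ℕ) : μ {ω | ω (N + 1) = y} = 0 := by
  have hcover : {ω : ℕ → α | ω (N + 1) = y} =
      ⋃ z, {ω | ∀ i : Fin 2, ω (N + i) = ![z, y] i} := by
    ext ω
    simp [Fin.forall_fin_two]
  rw [hcover]
  exact measure_iUnion_null fun z => by rw [hμ.measure_path_eq_mul N]; simp [hy]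

lemma le_measure_of_forall_exists_path [IsProbabilityMeasure μ] (hμ : IsMarkovLaw p x μ)
    (N k : ℕ) (A : Set (ℕ → α)) (c : ℝ≥0∞)
    (h : ∀ x, μ {ω | ω N = x} ≠ 0 → ∃ w : Fin (k + 1) → α, w 0 = x ∧
      c ≤ ∏ i : Fin k, p (w i.castSucc) (w i.succ) ∧
      ∀ ω : ℕ → α, (∀ i : Fin (k + 1), ω (N + i) = w i) → ω ∈ A) :
    c ≤ μ A := by
  have hmeas : ∀ y : α, MeasurableSet {ω : ℕ → α | ω N = y} :=
    fun _ => measurableSet_eq_fun (measurable_pi_apply N) measurable_const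
  have hfiber : ∀ y, μ {ω | ω N = y} * c ≤ μ ({ω | ω N = y} ∩ A) := by
    intro y
    by_cases hy : μ {ω | ω N = y} = 0
    · simp [hy]
    obtain ⟨w, rfl, hc, hA⟩ := h y hy
    calc μ {ω | ω N = w 0} * c
        ≤ μ {ω | ω N = w 0} * ∏ i : Fin k, p (w i.castSucc) (w i.succ) := by gcongr
      _ = μ {ω | ∀ i : Fin (k + 1), ω (N + i) = w i} := (hμ.measure_path_eq_mul N w).symm
      _ ≤ μ ({ω | ω N = w 0} ∩ A) := measure_mono fun ω hω => ⟨by simpa using hω 0, hA ω hω⟩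
  have hsum : ∀ ν : Measure (ℕ → α), ∑' y, ν {ω | ω N = y} = ν Set.univ := fun ν =>
    (tsum_univ _).symm.trans
      (tsum_measure_preimage_singleton Set.countable_univ fun y _ => hmeas y)
  have htotal : ∑' y, μ {ω | ω N = y} = 1 := by rw [hsum, measure_univ]
  have hsplit : ∑' y, μ ({ω | ω N = y} ∩ A) = μ A := by
    simp_rw [← Measure.restrict_apply (hmeas _)]
    rw [hsum, Measure.restrict_apply_univ]
  calc c = ∑' y, μ {ω | ω N = y} * c := by rw [ENNReal.tsum_mul_right, htotal, one_mul]
    _ ≤ ∑' y, μ ({ω | ω N = y} ∩ A) := ENNReal.tsum_le_tsum hfiber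
    _ = μ A := hsplit

end IsMarkovLaw

end MarkovChain

section Range

open Finset

variable {α : Type*}

def HasBlockRepeat (ω : ℕ → α) (m : ℕ) : Prop :=
  ω (3 * m + 1) = ω (3 * m + 3) ∨ ω (3 * m) = ω (3 * m + 2)

lemma card_image_range_add_card_le [DecidableEq α] (ω : ℕ → α) (n : ℕ) (T : Finset ℕ)
    (hT : T ⊆ range (n + 1)) (hrep : ∀ j ∈ T, ∃ i < j, ω i = ω j) :
    #((range (n + 1)).image ω) + #T ≤ n + 1 := by
  have hfirst : ∀ j ∈ range (n + 1), ω j ∈ (range (n + 1) \ T).image ω := by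
    intro j
    induction j using Nat.strong_induction_on with
    | _ j ih =>
      intro hj
      by_cases hjT : j ∈ T
      · obtain ⟨i, hij, hi⟩ := hrep j hjT
        rw [← hi]
        exact ih i hij (by simp only [mem_range] at hj ⊢; omega)
      · exact mem_image_of_mem ω (mem_sdiff.mpr ⟨hj, hjT⟩)
  have hsub : (range (n + 1)).image ω ⊆ (range (n + 1) \ T).image ω := by
    simpa only [image_subset_iff] using hfirst
  have := (card_le_card hsub).trans card_image_le
  rw [card_sdiff_of_subset hT, card_range] at this
  have := card_le_card hT
  rw [card_range] at this
  omega

lemma card_image_range_add_card_filter_le [DecidableEq α] (ω : ℕ → α) (n : ℕ) :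
    #((range (n + 1)).image ω) + #((Icc 1 (n / 3 - 1)).filter (HasBlockRepeat ω)) ≤ n + 1 := by
  -- `t m` is a time of block `m` at which the walk revisits an earlier vertex.
  let t : ℕ → ℕ := fun m => if ω (3 * m) = ω (3 * m + 2) then 3 * m + 2 else 3 * m + 3
  have ht : ∀ m, 3 * m + 2 ≤ t m ∧ t m ≤ 3 * m + 3 := fun m => by
    simp only [t]; split <;> omega
  have hinj : Set.InjOn t ((Icc 1 (n / 3 - 1)).filter (HasBlockRepeat ω)) :=
    fun m _ m' _ h => by have := ht m; have := ht m'; omega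
  rw [← card_image_of_injOn hinj]
  refine card_image_range_add_card_le ω n _ ?_ ?_
  · intro j hj
    obtain ⟨m, hm, rfl⟩ := mem_image.mp hj
    have := mem_Icc.mp (mem_filter.mp hm).1
    have := ht m
    simp only [mem_range]
    omega
  · intro j hj
    obtain ⟨m, hm, rfl⟩ := mem_image.mp hj
    by_cases h : ω (3 * m) = ω (3 * m + 2)
    · exact ⟨3 * m, by simp only [t, if_pos h]; omega, by simp only [t, if_pos h, h]⟩
    · have h' := ((mem_filter.mp hm).2).resolve_right h
      exact ⟨3 * m + 1, by simp only [t, if_neg h]; omega, by simp only [t, if_neg h, h']⟩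

variable [MeasurableSpace α] [MeasurableSingletonClass α] [Countable α]

lemma measurableSet_hasBlockRepeat (m : ℕ) : MeasurableSet {ω : ℕ → α | HasBlockRepeat ω m} :=
  (measurableSet_eq_fun (measurable_pi_apply (3 * m + 1)) (measurable_pi_apply (3 * m + 3))).union
    (measurableSet_eq_fun (measurable_pi_apply (3 * m)) (measurable_pi_apply (3 * m + 2)))

lemma lintegral_card_image_range_add_sum_le [DecidableEq α] (μ : Measure (ℕ → α))
    [IsProbabilityMeasure μ] (n : ℕ) :
    ∫⁻ ω, (#((range (n + 1)).image ω) : ℝ≥0∞) ∂μ +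
      ∑ m ∈ Icc 1 (n / 3 - 1), μ {ω | HasBlockRepeat ω m} ≤ n + 1 := by
  have hcount : ∀ ω : ℕ → α, ∑ m ∈ Icc 1 (n / 3 - 1), {ω | HasBlockRepeat ω m}.indicator 1 ω =
      (#((Icc 1 (n / 3 - 1)).filter (HasBlockRepeat ω)) : ℝ≥0∞) := fun ω => by
    simp [Set.indicator_apply]
  calc ∫⁻ ω, (#((range (n + 1)).image ω) : ℝ≥0∞) ∂μ +
        ∑ m ∈ Icc 1 (n / 3 - 1), μ {ω | HasBlockRepeat ω m}
      = ∫⁻ ω, ((#((range (n + 1)).image ω) +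
          #((Icc 1 (n / 3 - 1)).filter (HasBlockRepeat ω)) : ℕ) : ℝ≥0∞) ∂μ := by
        simp_rw [← lintegral_indicator_one (measurableSet_hasBlockRepeat _)]
        rw [← lintegral_finsetSum _ fun m _ => measurable_one.indicator
          (measurableSet_hasBlockRepeat m), ← lintegral_add_right _ (Finset.measurable_sum _
            fun m _ => measurable_one.indicator (measurableSet_hasBlockRepeat m))]
        simp_rw [hcount, Nat.cast_add]
    _ ≤ ∫⁻ _, ((n + 1 : ℕ) : ℝ≥0∞) ∂μ :=
        lintegral_mono fun ω => Nat.cast_le.mpr (card_image_range_add_card_filter_le ω n)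
    _ = n + 1 := by simp

lemma limsup_div_le_of_le_mul_add {f : ℕ → ℝ≥0∞} {a c : ℝ≥0∞} (hc : c ≠ ⊤)
    (h : ∀ n, f n ≤ a * n + c) : limsup (fun n => f n / n) atTop ≤ a := by
  have hlim : Tendsto (fun n : ℕ => a + c * (n : ℝ≥0∞)⁻¹) atTop (nhds a) := by
    simpa using tendsto_const_nhds.add
      (ENNReal.Tendsto.const_mul ENNReal.tendsto_inv_nat_nhds_zero (Or.inr hc))
  calc limsup (fun n => f n / n) atTop ≤ limsup (fun n : ℕ => a + c * (n : ℝ≥0∞)⁻¹) atTop := by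
        refine limsup_le_limsup ?_
        filter_upwards [eventually_ne_atTop 0] with n hn
        refine ENNReal.div_le_of_le_mul ((h n).trans_eq ?_)
        rw [add_mul, mul_assoc, ENNReal.inv_mul_cancel (by exact_mod_cast hn)
          (ENNReal.natCast_ne_top n), mul_one]
    _ = a := hlim.limsup_eq

lemma lintegral_card_image_range_le [DecidableEq α] (μ : Measure (ℕ → α)) [IsProbabilityMeasure μ]
    (h : ∀ m, 1 ≤ m → 1 / 8 ≤ μ {ω | HasBlockRepeat ω m}) (n : ℕ) :
    ∫⁻ ω, (#((range (n + 1)).image ω) : ℝ≥0∞) ∂μ ≤ 23 / 24 * n + 2 := by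
  set M := n / 3 - 1
  have hsum : (M : ℝ≥0∞) * (1 / 8) ≤ ∑ m ∈ Icc 1 M, μ {ω | HasBlockRepeat ω m} :=
    calc (M : ℝ≥0∞) * (1 / 8) = ∑ _m ∈ Icc 1 M, (1 / 8 : ℝ≥0∞) := by simp
      _ ≤ _ := sum_le_sum fun m hm => h m (mem_Icc.mp hm).1
  have harith : (n : ℝ≥0∞) + 1 ≤ 23 / 24 * n + 2 + M * (1 / 8) := by
    have key : ((n : ℝ≥0) + 1 : ℝ≥0) ≤ 23 / 24 * n + 2 + M * (1 / 8) := by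
      rw [← NNReal.coe_le_coe]
      push_cast
      have : (n : ℝ) ≤ 3 * M + 5 := by exact_mod_cast (by omega : n ≤ 3 * M + 5)
      linarith
    simpa [ENNReal.coe_div] using ENNReal.coe_le_coe.mpr key
  have hfin : (M : ℝ≥0∞) * (1 / 8) ≠ ⊤ :=
    ENNReal.mul_ne_top (ENNReal.natCast_ne_top M) (by norm_num)
  refine (ENNReal.add_le_add_iff_right hfin).mp ?_
  calc _ ≤ _ + ∑ m ∈ Icc 1 M, μ {ω | HasBlockRepeat ω m} := by gcongr
    _ ≤ n + 1 := lintegral_card_image_range_add_sum_le μ n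
    _ ≤ _ := harith

end Range

lemma eq_zero_of_hasSum_one_of_eq_one {ι : Type*} {f : ι → ℝ} (hf : ∀ i, 0 ≤ f i)
    (hsum : HasSum f 1) {i j : ι} (hij : i ≠ j) (hj : f j = 1) : f i = 0 := by
  have := sum_le_hasSum {i, j} (fun k _ => hf k) hsum
  rw [Finset.sum_pair hij, hj] at this
  linarith [hf i]

namespace Setup

variable {V₁ V₂ : Type} [Countable V₁] [Countable V₂] [DecidableEq V₁] [DecidableEq V₂]
variable (S : Setup V₁ V₂)

instance : DiscreteMeasurableSpace S.Word := ⟨fun _ => trivial⟩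

lemma isMarkovLaw (X : RW S) (x : S.Word) : IsMarkovLaw S.stepE x (X.P x) := ⟨X.cyl x⟩

lemma stepE_emp_eq_zero (h₁ : ∀ z, S.p₁ z S.o₁ = 0) (h₂ : ∀ z, S.p₂ z S.o₂ = 0) (v : S.Word) :
    S.stepE v S.emp = 0 := by
  have hl₁ : S.lastIn₁ S.emp = S.o₁ := rfl
  have hl₂ : S.lastIn₂ S.emp = S.o₂ := rfl
  simp [stepE, step, pbar₁, pbar₂, hl₁, hl₂, h₁, h₂]

/- Lists built from these are typed `List S.Letter`; a bare `[Sum.inr β]` would be a list over the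
unfolded sum type, on which the list lemmas for `S.Letter` no longer match. -/
abbrev letter₁ (a : {v : V₁ // v ≠ S.o₁}) : S.Letter := Sum.inl a

abbrev letter₂ (β : {v : V₂ // v ≠ S.o₂}) : S.Letter := Sum.inr β

variable {S}

lemma stripLast_of_val_eq (i : Bool) {x : S.Word} {u : List S.Letter} {g : S.Letter}
    (hx : x.val = u ++ [g]) : S.stripLast i x = if S.ltype g = i then u else x.val := by
  rw [stripLast, hx, List.getLast?_concat, List.dropLast_concat]
  simp

lemma lastIn₂_of_val_eq {x : S.Word} {u : List S.Letter} {g : S.Letter}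
    (hx : x.val = u ++ [g]) : S.lastIn₂ x = Sum.elim (fun _ => S.o₂) Subtype.val g := by
  rw [lastIn₂, hx, List.getLast?_concat]
  rfl

lemma step_of_val_eq_append_inr {x y : S.Word} {u : List S.Letter} {a : {v : V₁ // v ≠ S.o₁}}
    (hx : x.val = u ++ [S.letter₁ a]) {β : {v : V₂ // v ≠ S.o₂}}
    (hy : y.val = x.val ++ [S.letter₂ β]) :
    S.step x y = (1 - S.α) * S.p₂ S.o₂ β := by
  have hne : u ≠ y.val := fun h => by simpa [hy, hx] using congrArg List.length h
  rw [step, pbar₁, pbar₂, stripLast_of_val_eq true hx, stripLast_of_val_eq true hy,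
    stripLast_of_val_eq false hx, stripLast_of_val_eq false hy, lastIn₂_of_val_eq hx,
    lastIn₂_of_val_eq hy]
  simp [ltype, hne]

lemma step_of_val_eq_replace_inr {x y : S.Word} {u : List S.Letter}
    {β β' : {v : V₂ // v ≠ S.o₂}} (hββ' : β ≠ β') (hx : x.val = u ++ [S.letter₂ β])
    (hy : y.val = u ++ [S.letter₂ β']) :
    S.step x y = (1 - S.α) * S.p₂ β β' := by
  have hne : x.val ≠ y.val := fun h => by
    rw [hx, hy, List.append_cancel_left_eq, List.singleton_inj] at h
    exact hββ' (Sum.inr_injective h)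
  rw [step, pbar₁, pbar₂, stripLast_of_val_eq true hx, stripLast_of_val_eq true hy,
    stripLast_of_val_eq false hx, stripLast_of_val_eq false hy, lastIn₂_of_val_eq hx,
    lastIn₂_of_val_eq hy]
  simp [ltype, hne]

lemma exists_val_eq_append_inr {x : S.Word} {u : List S.Letter} {a : {v : V₁ // v ≠ S.o₁}}
    (hx : x.val = u ++ [S.letter₁ a]) (β : {v : V₂ // v ≠ S.o₂}) :
    ∃ y : S.Word, y.val = x.val ++ [S.letter₂ β] :=
  ⟨⟨x.val ++ [S.letter₂ β], List.isChain_append.mpr ⟨x.2, List.isChain_singleton _,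
    fun g hg g' hg' => by
      rw [hx, List.getLast?_concat, Option.mem_some_iff] at hg
      rw [List.head?_cons, Option.mem_some_iff] at hg'
      subst hg hg'
      simp [ltype]⟩⟩, rfl⟩

lemma exists_val_eq_replace_inr {x : S.Word} {u : List S.Letter} {β : {v : V₂ // v ≠ S.o₂}}
    (hx : x.val = u ++ [S.letter₂ β]) (β' : {v : V₂ // v ≠ S.o₂}) :
    ∃ y : S.Word, y.val = u ++ [S.letter₂ β'] := by
  have h : List.IsChain (fun g g' => S.ltype g ≠ S.ltype g') x.val := x.2
  rw [hx, List.isChain_append] at h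
  exact ⟨⟨u ++ [S.letter₂ β'], List.isChain_append.mpr ⟨h.1, List.isChain_singleton _,
    fun g hg g' hg' => by
      rw [List.head?_cons, Option.mem_some_iff] at hg'
      subst hg'
      simpa [ltype] using h.2.2 g hg _ rfl⟩⟩, rfl⟩

variable (S) in
/-- `Aₙ` is `IsABlock (inl a) (inr b) (inr c) X_{3n} X_{3n+1} X_{3n+2} X_{3n+3}`. -/
def IsABlock (ga gb gc : S.Letter) (x₀ x₁ x₂ x₃ : S.Word) : Prop :=
  ((S.lastLetter x₀ = some ga ∧ S.lastLetter x₁ = some gb ∧ x₁ = x₃) ∨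
    (S.lastLetter x₀ = some gb ∧ x₀ = x₂)) ∨
    (S.lastLetter x₀ = some gc ∧ S.lastLetter x₁ = some gb ∧ x₁ = x₃)

lemma IsABlock.eq_or_eq {ga gb gc : S.Letter} {x₀ x₁ x₂ x₃ : S.Word}
    (h : S.IsABlock ga gb gc x₀ x₁ x₂ x₃) : x₁ = x₃ ∨ x₀ = x₂ := by
  rcases h with (h | h) | h
  exacts [Or.inl h.2.2, Or.inr h.2, Or.inl h.2.2]

lemma lastLetter_of_val_eq {x : S.Word} {u : List S.Letter} {g : S.Letter}
    (hx : x.val = u ++ [g]) : S.lastLetter x = some g := by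
  rw [lastLetter, hx, List.getLast?_concat]

lemma exists_isABlock {a : V₁} {b c : V₂} (ha : a ≠ S.o₁) (hb : b ≠ S.o₂) (hc : c ≠ S.o₂)
    (hbc : b ≠ c) (hV₁ : ∀ x : V₁, x = S.o₁ ∨ x = a) (hV₂ : ∀ x : V₂, x = S.o₂ ∨ x = b ∨ x = c)
    (h2a : S.p₂ S.o₂ b = 1) (h2b : S.p₂ b c = 1) (h2c : S.p₂ c b = 1) (hα : S.α = 1 / 2)
    {x : S.Word} (hx : x ≠ S.emp) :
    ∃ y₁ y₂ y₃, S.IsABlock (S.letter₁ ⟨a, ha⟩) (S.letter₂ ⟨b, hb⟩) (S.letter₂ ⟨c, hc⟩) x y₁ y₂ y₃ ∧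
      S.step x y₁ = 1 / 2 ∧ S.step y₁ y₂ = 1 / 2 ∧ S.step y₂ y₃ = 1 / 2 := by
  have hα' : 1 - S.α = 1 / 2 := by rw [hα]; norm_num
  have hbc' : (⟨b, hb⟩ : {v : V₂ // v ≠ S.o₂}) ≠ ⟨c, hc⟩ := fun h => hbc (congrArg Subtype.val h)
  obtain ⟨u, g, hxg⟩ : ∃ u g, x.val = u ++ [g] :=
    (List.eq_nil_or_concat' x.val).resolve_left fun h => hx (Subtype.ext h)
  rcases g with ⟨a', ha'⟩ | ⟨β, hβ⟩
  · obtain rfl := (hV₁ a').resolve_left ha'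
    obtain ⟨y₁, hy₁⟩ := exists_val_eq_append_inr hxg ⟨b, hb⟩
    obtain ⟨y₂, hy₂⟩ := exists_val_eq_replace_inr hy₁ ⟨c, hc⟩
    refine ⟨y₁, y₂, y₁, Or.inl (Or.inl ⟨lastLetter_of_val_eq hxg, lastLetter_of_val_eq hy₁, rfl⟩),
      ?_, ?_, ?_⟩
    · rw [step_of_val_eq_append_inr hxg hy₁, h2a, hα', mul_one]
    · rw [step_of_val_eq_replace_inr hbc' hy₁ hy₂, h2b, hα', mul_one]
    · rw [step_of_val_eq_replace_inr hbc'.symm hy₂ hy₁, h2c, hα', mul_one]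
  · rcases (hV₂ β).resolve_left hβ with rfl | rfl
    · obtain ⟨y₁, hy₁⟩ := exists_val_eq_replace_inr hxg ⟨c, hc⟩
      refine ⟨y₁, x, y₁, Or.inl (Or.inr ⟨lastLetter_of_val_eq hxg, rfl⟩), ?_, ?_, ?_⟩
      · rw [step_of_val_eq_replace_inr hbc' hxg hy₁, h2b, hα', mul_one]
      · rw [step_of_val_eq_replace_inr hbc'.symm hy₁ hxg, h2c, hα', mul_one]
      · rw [step_of_val_eq_replace_inr hbc' hxg hy₁, h2b, hα', mul_one]
    · obtain ⟨y₁, hy₁⟩ := exists_val_eq_replace_inr hxg ⟨b, hb⟩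
      refine ⟨y₁, x, y₁, Or.inr ⟨lastLetter_of_val_eq hxg, lastLetter_of_val_eq hy₁, rfl⟩,
        ?_, ?_, ?_⟩
      · rw [step_of_val_eq_replace_inr hbc'.symm hxg hy₁, h2c, hα', mul_one]
      · rw [step_of_val_eq_replace_inr hbc' hy₁ hxg, h2b, hα', mul_one]
      · rw [step_of_val_eq_replace_inr hbc'.symm hxg hy₁, h2c, hα', mul_one]

lemma one_div_eight_le_measure_isABlock (X : RW S) {a : V₁} {b c : V₂} (ha : a ≠ S.o₁)
    (hb : b ≠ S.o₂) (hc : c ≠ S.o₂) (hbc : b ≠ c) (hV₁ : ∀ x : V₁, x = S.o₁ ∨ x = a)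
    (hV₂ : ∀ x : V₂, x = S.o₂ ∨ x = b ∨ x = c) (h2a : S.p₂ S.o₂ b = 1) (h2b : S.p₂ b c = 1)
    (h2c : S.p₂ c b = 1) (hα : S.α = 1 / 2) (hemp : ∀ v, S.stepE v S.emp = 0) {N : ℕ}
    (hN : 1 ≤ N) :
    1 / 8 ≤ X.P S.emp {ω | S.IsABlock (S.letter₁ ⟨a, ha⟩) (S.letter₂ ⟨b, hb⟩) (S.letter₂ ⟨c, hc⟩)
      (ω N) (ω (N + 1)) (ω (N + 2)) (ω (N + 3))} := by
  have := X.prob S.emp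
  have hμ := S.isMarkovLaw X S.emp
  refine hμ.le_measure_of_forall_exists_path N 3 _ _ fun x hx => ?_
  have hx : x ≠ S.emp := by
    rintro rfl
    obtain ⟨M, rfl⟩ : ∃ M, N = M + 1 := ⟨N - 1, by omega⟩
    exact hx (hμ.measure_eq_zero_of_forall_eq_zero hemp M)
  obtain ⟨y₁, y₂, y₃, hA, h₁, h₂, h₃⟩ := exists_isABlock ha hb hc hbc hV₁ hV₂ h2a h2b h2c hα hx
  refine ⟨![x, y₁, y₂, y₃], rfl, ?_, fun ω hω => ?_⟩
  · rw [Fin.prod_univ_three]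
    change 1 / 8 ≤ S.stepE x y₁ * S.stepE y₁ y₂ * S.stepE y₂ y₃
    rw [stepE, stepE, stepE, h₁, h₂, h₃, ENNReal.ofReal_div_of_pos two_pos]
    norm_num [← ENNReal.mul_inv]
  · obtain ⟨h0, h1, h2, h3⟩ : ω N = x ∧ ω (N + 1) = y₁ ∧ ω (N + 2) = y₂ ∧ ω (N + 3) = y₃ :=
      ⟨hω 0, hω 1, hω 2, hω 3⟩
    rw [Set.mem_ofPred_eq, h0, h1, h2, h3]
    exact hA

end Setup

/-- in the example `V₁ = {o₁,a}`, `V₂ = {o₂,b,c}` with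
`p₁(o₁,a) = p₁(a,a) = 1`, `p₂(o₂,b) = p₂(b,c) = p₂(c,b) = 1` and `α = 1/2`:
`P(Aₙ) ≥ 1/8` for every `n ≥ 1`, and consequently
`limsup E[Rₙ]/n ≤ 23/24 < 1`, so the asymptotic range is strictly smaller than
`1 − P[∃ n ≥ 1 : Xₙ = o] = 1` and the group-case formula fails. -/
theorem example_group_formula_fails
    {V₁ V₂ : Type} [Countable V₁] [Countable V₂] [DecidableEq V₁] [DecidableEq V₂]
    (S : Setup V₁ V₂) (X : RW S) (a : V₁) (b c : V₂)
    (ha : a ≠ S.o₁) (hb : b ≠ S.o₂) (hc : c ≠ S.o₂) (hbc : b ≠ c)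
    (hV₁ : ∀ x : V₁, x = S.o₁ ∨ x = a)
    (hV₂ : ∀ x : V₂, x = S.o₂ ∨ x = b ∨ x = c)
    (h1a : S.p₁ S.o₁ a = 1) (h1b : S.p₁ a a = 1)
    (h2a : S.p₂ S.o₂ b = 1) (h2b : S.p₂ b c = 1) (h2c : S.p₂ c b = 1)
    (hα : S.α = 1 / 2) :
    (∀ n : ℕ, 1 ≤ n →
      (1 / 8 : ℝ≥0∞) ≤ X.P S.emp (
        {ω | S.lastLetter (ω (3 * n)) = some (Sum.inl ⟨a, ha⟩) ∧
             S.lastLetter (ω (3 * n + 1)) = some (Sum.inr ⟨b, hb⟩) ∧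
             ω (3 * n + 1) = ω (3 * n + 3)} ∪
        {ω | S.lastLetter (ω (3 * n)) = some (Sum.inr ⟨b, hb⟩) ∧
             ω (3 * n) = ω (3 * n + 2)} ∪
        {ω | S.lastLetter (ω (3 * n)) = some (Sum.inr ⟨c, hc⟩) ∧
             S.lastLetter (ω (3 * n + 1)) = some (Sum.inr ⟨b, hb⟩) ∧
             ω (3 * n + 1) = ω (3 * n + 3)})) ∧
    Filter.atTop.limsup
      (fun n : ℕ => (∫⁻ ω, (S.rangeCount n ω : ℝ≥0∞) ∂X.P S.emp) / (n : ℝ≥0∞))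
      ≤ 23 / 24 ∧
    (23 / 24 : ℝ≥0∞) < 1 - X.P S.emp {ω | ∃ n, 1 ≤ n ∧ ω n = S.emp} := by
  have := X.prob S.emp
  have hp₁ : ∀ z, S.p₁ z S.o₁ = 0 := fun z =>
    eq_zero_of_hasSum_one_of_eq_one (S.p₁_nonneg z) (S.p₁_rowSum z) ha.symm
      (by rcases hV₁ z with rfl | rfl <;> assumption)
  have hp₂ : ∀ z, S.p₂ z S.o₂ = 0 := fun z => by
    rcases hV₂ z with rfl | rfl | rfl
    exacts [eq_zero_of_hasSum_one_of_eq_one (S.p₂_nonneg _) (S.p₂_rowSum _) hb.symm h2a,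
      eq_zero_of_hasSum_one_of_eq_one (S.p₂_nonneg _) (S.p₂_rowSum _) hc.symm h2b,
      eq_zero_of_hasSum_one_of_eq_one (S.p₂_nonneg _) (S.p₂_rowSum _) hb.symm h2c]
  have hemp := S.stepE_emp_eq_zero hp₁ hp₂
  have hA : ∀ N, 1 ≤ N → _ := fun N hN =>
    Setup.one_div_eight_le_measure_isABlock X ha hb hc hbc hV₁ hV₂ h2a h2b h2c hα hemp hN
  refine ⟨fun n hn => hA (3 * n) (by omega), ?_, ?_⟩
  · refine limsup_div_le_of_le_mul_add (c := 2) (by norm_num) fun n =>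
      lintegral_card_image_range_le _ (fun m hm => ?_) n
    exact (hA (3 * m) (by omega)).trans (measure_mono fun ω hω => hω.eq_or_eq)
  · have hret : X.P S.emp {ω | ∃ n, 1 ≤ n ∧ ω n = S.emp} = 0 := by
      refine measure_mono_null (fun ω ⟨n, hn, hω⟩ => ?_) (measure_iUnion_null fun m =>
        (S.isMarkovLaw X S.emp).measure_eq_zero_of_forall_eq_zero hemp m)
      obtain ⟨m, rfl⟩ : ∃ m, n = m + 1 := ⟨n - 1, by omega⟩
      exact Set.mem_iUnion.mpr ⟨m, hω⟩
    rw [hret, tsub_zero, ENNReal.div_lt_iff (by norm_num) (by norm_num)]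
    norm_num
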